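/- arXiv:math/0510192 — 2 statements merged into one kernel-verified Lean document; each statement's English description precedes it below -/
import Mathlib

section
/- If A > 0 and φ(ℓ) = e^{Aℓ}, then for any smooth path c of immersed curves, the weighted length L(c) = ∫₀¹ (e^{Aℓ(t)} ∫_{S¹} |c_t^⊥|² |c_θ| dθ)^{1/2} dt is at least √(Ae) times the swept area ∫₀¹ ∫_{S¹} |c_t^⊥||c_θ| dθ dt. -/
noncomputable def cT (c : ℝ → ℝ → ℂ) (t θ : ℝ) : ℂ := deriv (fun s => c s θ) t

noncomputable def cTh (c : ℝ → ℝ → ℂ) (t θ : ℝ) : ℂ := deriv (fun x => c t x) θ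

noncomputable def unitNormal (c : ℝ → ℝ → ℂ) (t θ : ℝ) : ℂ :=
  Complex.I * cTh c t θ / (‖cTh c t θ‖ : ℂ)

noncomputable def normalSpeed (c : ℝ → ℝ → ℂ) (t θ : ℝ) : ℝ :=
  (cT c t θ * (starRingEnd ℂ) (unitNormal c t θ)).re

noncomputable def curveLen (c : ℝ → ℝ → ℂ) (t : ℝ) : ℝ :=
  ∫ θ in (0:ℝ)..(2 * Real.pi), ‖cTh c t θ‖

/-- Cauchy–Schwarz for interval integrals of continuous nonnegative functions. -/
lemma cs_interval {f g : ℝ → ℝ} (hf : Continuous f) (hg : Continuous g)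
    (hf0 : ∀ x, 0 ≤ f x) (hg0 : ∀ x, 0 ≤ g x) {a b : ℝ} (hab : a ≤ b) :
    ∫ x in a..b, f x * g x ≤
      Real.sqrt (∫ x in a..b, f x ^ 2) * Real.sqrt (∫ x in a..b, g x ^ 2) := by
  rw [intervalIntegral.integral_of_le hab, intervalIntegral.integral_of_le hab,
    intervalIntegral.integral_of_le hab]
  set μ := MeasureTheory.volume.restrict (Set.Ioc a b) with hμ
  have hpq : Real.HolderConjugate 2 2 := Real.HolderConjugate.two_two
  have hmem : ∀ (h : ℝ → ℝ), Continuous h → MeasureTheory.MemLp h (ENNReal.ofReal 2) μ := by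
    intro h hh
    obtain ⟨C, hC⟩ := (isCompact_Icc (a := a) (b := b)).exists_bound_of_continuousOn
      hh.continuousOn
    refine MeasureTheory.MemLp.of_bound hh.aestronglyMeasurable C ?_
    filter_upwards [MeasureTheory.ae_restrict_mem measurableSet_Ioc] with x hx
    exact hC x (Set.Ioc_subset_Icc_self hx)
  have := MeasureTheory.integral_mul_le_Lp_mul_Lq_of_nonneg hpq
    (f := f) (g := g) (MeasureTheory.ae_of_all _ hf0) (MeasureTheory.ae_of_all _ hg0)
    (hmem f hf) (hmem g hg)
  have h2 : ∀ (h : ℝ → ℝ), (∫ x, h x ^ (2:ℝ) ∂μ) = ∫ x, h x ^ 2 ∂μ := by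
    intro h
    refine MeasureTheory.integral_congr_ae (MeasureTheory.ae_of_all _ fun x => ?_)
    show h x ^ (2:ℝ) = h x ^ (2:ℕ)
    rw [← Real.rpow_natCast (h x) 2]
    norm_num
  rw [h2 f, h2 g] at this
  refine this.trans (le_of_eq ?_)
  rw [Real.sqrt_eq_rpow, Real.sqrt_eq_rpow]

lemma cT_cont {c : ℝ → ℝ → ℂ} (hc : ContDiff ℝ (⊤ : ℕ∞) (fun p : ℝ × ℝ => c p.1 p.2)) :
    Continuous fun p : ℝ × ℝ => cT c p.1 p.2 := by
  set F := fun p : ℝ × ℝ => c p.1 p.2 with hF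
  have hd : Differentiable ℝ F := hc.differentiable (by simp)
  have key : ∀ p : ℝ × ℝ, cT c p.1 p.2 = fderiv ℝ F p (1, 0) := by
    intro p
    have h1 : HasDerivAt (fun s => c s p.2) (fderiv ℝ F p (1, 0)) p.1 := by
      have h2 : HasDerivAt (fun s : ℝ => (s, p.2)) ((1 : ℝ), (0 : ℝ)) p.1 :=
        (hasDerivAt_id p.1).prodMk (hasDerivAt_const p.1 p.2)
      have := (hd p).hasFDerivAt.comp_hasDerivAt p.1 h2
      exact this
    exact h1.deriv
  have : (fun p : ℝ × ℝ => cT c p.1 p.2) = fun p => fderiv ℝ F p (1, 0) :=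
    funext fun p => key p
  rw [this]
  exact (hc.continuous_fderiv (by simp)).clm_apply continuous_const

lemma cTh_cont {c : ℝ → ℝ → ℂ} (hc : ContDiff ℝ (⊤ : ℕ∞) (fun p : ℝ × ℝ => c p.1 p.2)) :
    Continuous fun p : ℝ × ℝ => cTh c p.1 p.2 := by
  set F := fun p : ℝ × ℝ => c p.1 p.2 with hF
  have hd : Differentiable ℝ F := hc.differentiable (by simp)
  have key : ∀ p : ℝ × ℝ, cTh c p.1 p.2 = fderiv ℝ F p (0, 1) := by
    intro p
    have h1 : HasDerivAt (fun x => c p.1 x) (fderiv ℝ F p (0, 1)) p.2 := by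
      have h2 : HasDerivAt (fun x : ℝ => (p.1, x)) ((0 : ℝ), (1 : ℝ)) p.2 :=
        (hasDerivAt_const p.2 p.1).prodMk (hasDerivAt_id p.2)
      have := (hd p).hasFDerivAt.comp_hasDerivAt p.2 h2
      exact this
    exact h1.deriv
  have : (fun p : ℝ × ℝ => cTh c p.1 p.2) = fun p => fderiv ℝ F p (0, 1) :=
    funext fun p => key p
  rw [this]
  exact (hc.continuous_fderiv (by simp)).clm_apply continuous_const

lemma normalSpeed_cont {c : ℝ → ℝ → ℂ} (hc : ContDiff ℝ (⊤ : ℕ∞) (fun p : ℝ × ℝ => c p.1 p.2))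
    (himm : ∀ t θ, cTh c t θ ≠ 0) :
    Continuous fun p : ℝ × ℝ => normalSpeed c p.1 p.2 := by
  have hT := cT_cont hc
  have hTh := cTh_cont hc
  have hnorm : Continuous fun p : ℝ × ℝ => ((‖cTh c p.1 p.2‖ : ℝ) : ℂ) :=
    Complex.continuous_ofReal.comp hTh.norm
  have hne : ∀ p : ℝ × ℝ, ((‖cTh c p.1 p.2‖ : ℝ) : ℂ) ≠ 0 := fun p => by
    simp [Complex.ofReal_ne_zero, norm_ne_zero_iff, himm p.1 p.2]
  have hU : Continuous fun p : ℝ × ℝ => unitNormal c p.1 p.2 := by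
    simp only [unitNormal]
    exact (continuous_const.mul hTh).div hnorm hne
  exact Complex.continuous_re.comp (hT.mul (Complex.continuous_conj.comp hU))

set_option maxHeartbeats 1000000 in
/-- For φ(ℓ) = e^{Aℓ}, L(c) ≥ √(Ae) · (swept area). -/
theorem stmt3 (A : ℝ) (hA : 0 < A) (c : ℝ → ℝ → ℂ)
    (hc : ContDiff ℝ (⊤ : ℕ∞) (fun p : ℝ × ℝ => c p.1 p.2))
    (himm : ∀ t θ, cTh c t θ ≠ 0) :
    Real.sqrt (A * Real.exp 1) *
        ∫ t in (0:ℝ)..1, ∫ θ in (0:ℝ)..(2 * Real.pi),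
          |normalSpeed c t θ| * ‖cTh c t θ‖ ≤
      ∫ t in (0:ℝ)..1,
        Real.sqrt (Real.exp (A * curveLen c t) *
          ∫ θ in (0:ℝ)..(2 * Real.pi), (normalSpeed c t θ) ^ 2 * ‖cTh c t θ‖) := by
  have h2pi : (0:ℝ) ≤ 2 * Real.pi := by positivity
  have hv : Continuous fun p : ℝ × ℝ => normalSpeed c p.1 p.2 := normalSpeed_cont hc himm
  have hw : Continuous fun p : ℝ × ℝ => ‖cTh c p.1 p.2‖ := (cTh_cont hc).norm
  -- the three parametric integrals are continuous in t
  have hS : Continuous fun t => ∫ θ in (0:ℝ)..(2 * Real.pi),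
      |normalSpeed c t θ| * ‖cTh c t θ‖ :=
    intervalIntegral.continuous_parametric_intervalIntegral_of_continuous'
      (f := fun t θ => |normalSpeed c t θ| * ‖cTh c t θ‖) (hv.abs.mul hw) 0 (2 * Real.pi)
  have hQ : Continuous fun t => ∫ θ in (0:ℝ)..(2 * Real.pi),
      (normalSpeed c t θ) ^ 2 * ‖cTh c t θ‖ :=
    intervalIntegral.continuous_parametric_intervalIntegral_of_continuous'
      (f := fun t θ => (normalSpeed c t θ) ^ 2 * ‖cTh c t θ‖) (show Continuous fun p : ℝ × ℝ => (normalSpeed c p.1 p.2) ^ 2 * ‖cTh c p.1 p.2‖ from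
        (hv.pow 2).mul hw) 0 (2 * Real.pi)
  have hL : Continuous (curveLen c) :=
    intervalIntegral.continuous_parametric_intervalIntegral_of_continuous'
      (f := fun t θ => ‖cTh c t θ‖) hw 0 (2 * Real.pi)
  set S := fun t => ∫ θ in (0:ℝ)..(2 * Real.pi), |normalSpeed c t θ| * ‖cTh c t θ‖ with hSdef
  set Q := fun t => ∫ θ in (0:ℝ)..(2 * Real.pi), (normalSpeed c t θ) ^ 2 * ‖cTh c t θ‖ with hQdef
  -- pointwise inequality
  have pointwise : ∀ t : ℝ, Real.sqrt (A * Real.exp 1) * S t ≤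
      Real.sqrt (Real.exp (A * curveLen c t) * Q t) := by
    intro t
    have hwt : Continuous fun θ => ‖cTh c t θ‖ := hw.comp₂ continuous_const continuous_id
    have hvt : Continuous fun θ => normalSpeed c t θ := hv.comp₂ continuous_const continuous_id
    have hS0 : 0 ≤ S t := intervalIntegral.integral_nonneg h2pi fun θ _ =>
      mul_nonneg (abs_nonneg _) (norm_nonneg _)
    have hQ0 : 0 ≤ Q t := intervalIntegral.integral_nonneg h2pi fun θ _ =>
      mul_nonneg (sq_nonneg _) (norm_nonneg _)
    have hL0 : 0 ≤ curveLen c t := intervalIntegral.integral_nonneg h2pi fun θ _ =>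
      norm_nonneg _
    -- Cauchy–Schwarz: S t ≤ √(Q t) * √(L t)
    have hcs : S t ≤ Real.sqrt (Q t) * Real.sqrt (curveLen c t) := by
      have h1 : S t = ∫ θ in (0:ℝ)..(2 * Real.pi),
          (|normalSpeed c t θ| * Real.sqrt ‖cTh c t θ‖) * Real.sqrt ‖cTh c t θ‖ := by
        refine intervalIntegral.integral_congr fun θ _ => ?_
        rw [mul_assoc, Real.mul_self_sqrt (norm_nonneg _)]
      have h2 : Q t = ∫ θ in (0:ℝ)..(2 * Real.pi),
          (|normalSpeed c t θ| * Real.sqrt ‖cTh c t θ‖) ^ 2 := by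
        refine intervalIntegral.integral_congr fun θ _ => ?_
        rw [mul_pow, sq_abs, Real.sq_sqrt (norm_nonneg _)]
      have h3 : curveLen c t = ∫ θ in (0:ℝ)..(2 * Real.pi),
          (Real.sqrt ‖cTh c t θ‖) ^ 2 := by
        refine intervalIntegral.integral_congr fun θ _ => ?_
        rw [Real.sq_sqrt (norm_nonneg _)]
      rw [h1, h2, h3]
      exact cs_interval (hvt.abs.mul (hwt.sqrt)) hwt.sqrt
        (fun θ => mul_nonneg (abs_nonneg _) (Real.sqrt_nonneg _))
        (fun θ => Real.sqrt_nonneg _) h2pi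
    have hS2 : S t ^ 2 ≤ Q t * curveLen c t := by
      have := mul_self_le_mul_self hS0 hcs
      calc S t ^ 2 = S t * S t := sq (S t) ▸ (sq (S t)).symm ▸ by ring
        _ ≤ (Real.sqrt (Q t) * Real.sqrt (curveLen c t)) *
            (Real.sqrt (Q t) * Real.sqrt (curveLen c t)) := this
        _ = Real.sqrt (Q t) * Real.sqrt (Q t) *
            (Real.sqrt (curveLen c t) * Real.sqrt (curveLen c t)) := by ring
        _ = Q t * curveLen c t := by
            rw [Real.mul_self_sqrt hQ0, Real.mul_self_sqrt hL0]
    -- e^x ≥ e x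
    have he : A * curveLen c t * Real.exp 1 ≤ Real.exp (A * curveLen c t) := by
      have h := Real.add_one_le_exp (A * curveLen c t - 1)
      have hx : Real.exp (A * curveLen c t) =
          Real.exp (A * curveLen c t - 1) * Real.exp 1 := by
        rw [← Real.exp_add]; ring_nf
      nlinarith [Real.exp_pos (1:ℝ)]
    have key : (A * Real.exp 1) * S t ^ 2 ≤ Real.exp (A * curveLen c t) * Q t := by
      have h1 : (A * Real.exp 1) * S t ^ 2 ≤ (A * Real.exp 1) * (Q t * curveLen c t) :=
        mul_le_mul_of_nonneg_left hS2 (by positivity)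
      have h2 : (A * Real.exp 1) * (Q t * curveLen c t) =
          (A * curveLen c t * Real.exp 1) * Q t := by ring
      have h3 : (A * curveLen c t * Real.exp 1) * Q t ≤
          Real.exp (A * curveLen c t) * Q t := mul_le_mul_of_nonneg_right he hQ0
      linarith
    calc Real.sqrt (A * Real.exp 1) * S t
        = Real.sqrt ((A * Real.exp 1) * S t ^ 2) := by
          rw [Real.sqrt_mul (show (0:ℝ) ≤ A * Real.exp 1 by positivity) (S t ^ 2),
            Real.sqrt_sq hS0]
      _ ≤ Real.sqrt (Real.exp (A * curveLen c t) * Q t) := Real.sqrt_le_sqrt key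
  rw [← intervalIntegral.integral_const_mul]
  have hG : Continuous fun t => Real.sqrt (Real.exp (A * curveLen c t) * Q t) :=
    ((Real.continuous_exp.comp (continuous_const.mul hL)).mul hQ).sqrt
  exact intervalIntegral.integral_mono_on zero_le_one
    ((continuous_const.mul hS).intervalIntegrable 0 1) (hG.intervalIntegrable 0 1)
    fun t _ => pointwise t
end

section
/- Let φ, φ' > 0 be constants and let m, h : S¹_ℓ → ℝ be smooth with m²(θ) ≤ φ'/φ² for all θ and φ∫h² dθ = 1. Then (φ/2)∫(m'h − mh')² dθ − (φ'/(2φ))∫(h')² dθ ≤ (φ/2)‖m'‖_∞² · (1/φ) + (φ/4)‖(m²)''‖_∞ · (1/φ); in particular this quantity is bounded above by a constant depending only on m, φ, φ' and not on h. -/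
open MeasureTheory intervalIntegral

private lemma periodic_deriv' {f : ℝ → ℝ} {l : ℝ} (hf : Function.Periodic f l) :
    Function.Periodic (deriv f) l := by
  intro x
  have : (fun y => f (y + l)) = f := funext fun y => hf y
  rw [← deriv_comp_add_const]
  rw [this]

/-- 'If' direction of boundedness: when m² ≤ φ'/φ² pointwise, the dangerous part of
the sectional curvature is bounded above uniformly in h. -/
theorem stmt12 (l φ φ' M₁ M₂ : ℝ) (hl : 0 < l) (hφ : 0 < φ) (hφ' : 0 < φ')
    (m h : ℝ → ℝ) (hm : ContDiff ℝ (⊤ : ℕ∞) m) (hh : ContDiff ℝ (⊤ : ℕ∞) h)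
    (hmp : Function.Periodic m l) (hhp : Function.Periodic h l)
    (hbound : ∀ θ, (m θ) ^ 2 ≤ φ' / φ ^ 2)
    (hnorm : φ * ∫ θ in (0:ℝ)..l, (h θ) ^ 2 = 1)
    (hM₁ : IsGreatest ((fun θ => |deriv m θ|) '' Set.Icc 0 l) M₁)
    (hM₂ : IsGreatest ((fun θ => |deriv (deriv (fun x => (m x) ^ 2)) θ|) '' Set.Icc 0 l) M₂) :
    φ / 2 * (∫ θ in (0:ℝ)..l, (deriv m θ * h θ - m θ * deriv h θ) ^ 2)
        - φ' / (2 * φ) * (∫ θ in (0:ℝ)..l, (deriv h θ) ^ 2)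
      ≤ φ / 2 * M₁ ^ 2 * (1 / φ) + φ / 4 * M₂ * (1 / φ) := by
  have hmd : Differentiable ℝ m := hm.differentiable (by simp)
  have hhd : Differentiable ℝ h := hh.differentiable (by simp)
  have hmc : Continuous m := hm.continuous
  have hhc : Continuous h := hh.continuous
  have hm'c : Continuous (deriv m) := hm.continuous_deriv (by simp)
  have hh'c : Continuous (deriv h) := hh.continuous_deriv (by simp)
  set f : ℝ → ℝ := fun x => (m x) ^ 2 with hf
  have hfc : ContDiff ℝ (⊤ : ℕ∞) f := hm.pow 2
  have hf1 := contDiff_infty_iff_deriv.mp (hfc.of_le (by simp))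
  have hf'c : Continuous (deriv f) := hf1.2.continuous
  have hf'd : Differentiable ℝ (deriv f) := hf1.2.differentiable (by simp)
  have hf''c : Continuous (deriv (deriv f)) := hf1.2.continuous_deriv (by simp)
  have hfp : Function.Periodic f l := fun x => by simp only [hf]; rw [hmp x]
  have hf'p : Function.Periodic (deriv f) l := periodic_deriv' hfp
  -- value of deriv f
  have hderf : ∀ θ, deriv f θ = 2 * m θ * deriv m θ := by
    intro θ
    have := ((hmd θ).hasDerivAt.pow 2).deriv
    show deriv (m ^ 2) θ = _
    simpa using this
  -- integrability helper
  have intg : ∀ {g : ℝ → ℝ}, Continuous g → IntervalIntegrable g volume 0 l :=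
    fun hg => hg.intervalIntegrable 0 l
  -- integration by parts
  have ibp : (∫ θ in (0:ℝ)..l, deriv (deriv f) θ * (h θ) ^ 2
        + deriv f θ * (2 * h θ * deriv h θ)) = 0 := by
    have hu : ∀ x ∈ Set.uIcc (0:ℝ) l, HasDerivAt (deriv f) (deriv (deriv f) x) x :=
      fun x _ => (hf'd x).hasDerivAt
    have hv : ∀ x ∈ Set.uIcc (0:ℝ) l,
        HasDerivAt (fun y => (h y) ^ 2) (2 * h x * deriv h x) x := by
      intro x _
      have := (hhd x).hasDerivAt.pow 2
      exact (by simpa [mul_comm, mul_assoc] using this : HasDerivAt (h ^ 2) (2 * h x * deriv h x) x)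
    have := integral_deriv_mul_eq_sub hu hv (intg hf''c)
      (intg (by fun_prop))
    rw [this]
    have h1 : deriv f l = deriv f 0 := by
      have := hf'p 0; simpa using this
    have h2 : h l = h 0 := by
      have := hhp 0; simpa using this
    rw [h1, h2]; ring
  have c1 : Continuous fun θ => (deriv m θ * h θ) ^ 2 + (m θ * deriv h θ) ^ 2 := by
    fun_prop
  have c2 : Continuous fun θ => deriv f θ * (2 * h θ * deriv h θ) := by
    fun_prop
  have c3 : Continuous fun θ => deriv (deriv f) θ * (h θ) ^ 2 := by fun_prop
  -- key identity
  have key : (∫ θ in (0:ℝ)..l, (deriv m θ * h θ - m θ * deriv h θ) ^ 2)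
      = (∫ θ in (0:ℝ)..l, ((deriv m θ * h θ) ^ 2 + (m θ * deriv h θ) ^ 2))
        + (1/2) * ∫ θ in (0:ℝ)..l, deriv (deriv f) θ * (h θ) ^ 2 := by
    have expand : ∀ θ, (deriv m θ * h θ - m θ * deriv h θ) ^ 2
        = ((deriv m θ * h θ) ^ 2 + (m θ * deriv h θ) ^ 2)
          - (1/2) * (deriv f θ * (2 * h θ * deriv h θ)) := by
      intro θ; rw [hderf θ]; ring
    rw [intervalIntegral.integral_congr (g := fun θ =>
        ((deriv m θ * h θ) ^ 2 + (m θ * deriv h θ) ^ 2)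
          - (1/2) * (deriv f θ * (2 * h θ * deriv h θ)))
        (fun θ _ => expand θ)]
    rw [intervalIntegral.integral_sub (intg c1) ((intg c2).const_mul _),
      intervalIntegral.integral_const_mul]
    have hsplit := intervalIntegral.integral_add (intg c3) (intg c2)
    have : (∫ θ in (0:ℝ)..l, deriv f θ * (2 * h θ * deriv h θ))
        = - ∫ θ in (0:ℝ)..l, deriv (deriv f) θ * (h θ) ^ 2 := by
      rw [hsplit] at ibp
      linarith
    rw [this]; ring
  -- the h² integral
  have hint : (∫ θ in (0:ℝ)..l, (h θ) ^ 2) = 1 / φ := by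
    rw [eq_div_iff hφ.ne', mul_comm]; exact hnorm
  -- bound 1
  have b1 : (∫ θ in (0:ℝ)..l, (deriv m θ * h θ) ^ 2) ≤ M₁ ^ 2 * (1 / φ) := by
    rw [← hint, ← intervalIntegral.integral_const_mul]
    apply intervalIntegral.integral_mono_on hl.le (intg (by fun_prop))
      ((intg (by fun_prop)).const_mul _)
    intro x hx
    have hMx : |deriv m x| ≤ M₁ := hM₁.2 ⟨x, hx, rfl⟩
    have h1 : (deriv m x) ^ 2 ≤ M₁ ^ 2 := by
      have := sq_abs (deriv m x)
      nlinarith [abs_nonneg (deriv m x)]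
    nlinarith [sq_nonneg (h x)]
  -- bound 2
  have b2 : (∫ θ in (0:ℝ)..l, (m θ * deriv h θ) ^ 2)
      ≤ φ' / φ ^ 2 * ∫ θ in (0:ℝ)..l, (deriv h θ) ^ 2 := by
    rw [← intervalIntegral.integral_const_mul]
    apply intervalIntegral.integral_mono_on hl.le (intg (by fun_prop))
      ((intg (by fun_prop)).const_mul _)
    intro x _
    have := hbound x
    nlinarith [sq_nonneg (deriv h x)]
  -- bound 3
  have b3 : (∫ θ in (0:ℝ)..l, deriv (deriv f) θ * (h θ) ^ 2) ≤ M₂ * (1 / φ) := by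
    rw [← hint, ← intervalIntegral.integral_const_mul]
    apply intervalIntegral.integral_mono_on hl.le (intg c3)
      ((intg (by fun_prop)).const_mul _)
    intro x hx
    have hMx : |deriv (deriv f) x| ≤ M₂ := hM₂.2 ⟨x, hx, rfl⟩
    have h1 : deriv (deriv f) x ≤ M₂ := (le_abs_self _).trans hMx
    nlinarith [sq_nonneg (h x)]
  -- split the sum integral
  have hsum : (∫ θ in (0:ℝ)..l, ((deriv m θ * h θ) ^ 2 + (m θ * deriv h θ) ^ 2))
      = (∫ θ in (0:ℝ)..l, (deriv m θ * h θ) ^ 2)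
        + ∫ θ in (0:ℝ)..l, (m θ * deriv h θ) ^ 2 :=
    intervalIntegral.integral_add (intg (by fun_prop)) (intg (by fun_prop))
  rw [key, hsum]
  have hD : 0 ≤ ∫ θ in (0:ℝ)..l, (deriv h θ) ^ 2 :=
    intervalIntegral.integral_nonneg hl.le (fun x _ => sq_nonneg _)
  have hc : φ / 2 * (φ' / φ ^ 2) = φ' / (2 * φ) := by
    field_simp
  nlinarith [mul_le_mul_of_nonneg_left b1 (by linarith : (0:ℝ) ≤ φ / 2),
    mul_le_mul_of_nonneg_left b2 (by linarith : (0:ℝ) ≤ φ / 2),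
    mul_le_mul_of_nonneg_left b3 (by linarith : (0:ℝ) ≤ φ / 4)]
end
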